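/- arXiv:1807.11523 — 3 statements merged into one kernel-verified Lean document; each statement's English description precedes it below -/
import Mathlib

section
/- Let H be a monoid such that the reduced quotient H_red = H/H^× is finitely generated, and let r = inf R̄(H). Then r is the only possible limit point of the set {ρ(a) : a ∈ H, 1 ≤ ρ(a) < r}; equivalently, for every ε > 0 the set {ρ(a) : a ∈ H and ρ(a) ≤ r − ε} is finite. -/
open Filter Topology

/-- The set of factorization lengths of `a`: the set of all `k` such that `a` is a
product of `k` atoms (irreducibles); by convention it is `{0}` for units. -/
noncomputable def lengthSet (H : Type*) [CommMonoid H] (a : H) : Set ℕ :=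
  open Classical in
  if IsUnit a then {0}
  else {k | ∃ f : Fin k → H, (∀ i, Irreducible (f i)) ∧ a = ∏ i, f i}

/-- The elasticity `ρ(a) = max L(a) / min L(a)` of an element of a BF-monoid,
with `ρ(a) = 1` for units. -/
noncomputable def elasticity (H : Type*) [CommMonoid H] (a : H) : ℝ :=
  open Classical in
  if IsUnit a then 1
  else ((sSup (lengthSet H a) : ℕ) : ℝ) / ((sInf (lengthSet H a) : ℕ) : ℝ)

/-- The elasticity `ρ(H) = sup {ρ(a) : a ∈ H} ∈ ℝ≥1 ∪ {∞}` of the monoid `H`. -/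
noncomputable def monoidElasticity (H : Type*) [CommMonoid H] : EReal :=
  ⨆ a : H, ((elasticity H a : ℝ) : EReal)

/-- The set `R̄(H)` of asymptotic elasticities `ρ̄(a) = lim_{n → ∞} ρ(aⁿ)`
of nonunits `a ∈ H` (membership requires the limit to exist). -/
def asympSet (H : Type*) [CommMonoid H] : Set EReal :=
  {r | ∃ a : H, ¬ IsUnit a ∧
    Tendsto (fun n : ℕ => ((elasticity H (a ^ n) : ℝ) : EReal)) atTop (nhds r)}

/-- `H` is locally finitely generated: for every `a ∈ H` there are only finitely many
atoms, up to associates, dividing some power of `a`. -/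
def LocallyFinitelyGenerated (H : Type*) [CommMonoid H] : Prop :=
  ∀ a : H, {u : Associates H | Irreducible u ∧ ∃ n : ℕ, u ∣ Associates.mk (a ^ n)}.Finite

/-- `H` is a BF-monoid: atomic (every nonunit has a factorization into atoms) and
all sets of lengths are finite. -/
def IsBFMonoid (H : Type*) [CommMonoid H] : Prop :=
  (∀ a : H, ¬ IsUnit a → (lengthSet H a).Nonempty) ∧ ∀ a : H, (lengthSet H a).Finite

/-- `(k, ℓ) ≠ (0,0)` is a nice pair with respect to `(a, b)` if
`max L((aᵏbˡ)ᵗ) = t · max L(aᵏbˡ)` and `min L((aᵏbˡ)ᵗ) = t · min L(aᵏbˡ)` for all `t ∈ ℕ`. -/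
def IsNicePair (H : Type*) [CommMonoid H] (a b : H) (k ℓ : ℕ) : Prop :=
  ¬ (k = 0 ∧ ℓ = 0) ∧ ∀ t : ℕ, 0 < t →
    sSup (lengthSet H ((a ^ k * b ^ ℓ) ^ t)) = t * sSup (lengthSet H (a ^ k * b ^ ℓ)) ∧
    sInf (lengthSet H ((a ^ k * b ^ ℓ) ^ t)) = t * sInf (lengthSet H (a ^ k * b ^ ℓ))

/-- `H` is strongly primary: `H ≠ H^×` and for every nonunit `a` there is `n ∈ ℕ`
such that every product of `n` nonunits of `H` is divisible by `a`. -/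
def StronglyPrimary (H : Type*) [CommMonoid H] : Prop :=
  (∃ a : H, ¬ IsUnit a) ∧ ∀ a : H, ¬ IsUnit a → ∃ n : ℕ, 0 < n ∧
    ∀ f : Fin n → H, (∀ i, ¬ IsUnit (f i)) → a ∣ ∏ i, f i

/-- `H` is half-factorial: atomic and `|L(a)| = 1` for every `a ∈ H`. -/
def IsHalfFactorial (H : Type*) [CommMonoid H] : Prop :=
  ∀ a : H, ∃ k : ℕ, lengthSet H a = {k}

/-!
Pass to the reduced monoid `Associates H`, which has only finitely many atoms, and encode
factorizations as multisets of atoms. An element with `ρ(a) ∉ {0, 1}` carries an extremal pair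
`(z, z')`: a shortest and a longest factorization of `a`, with `ρ(a) = |z'| / |z|`. Infinitely
many elasticities `≤ r - ε` give, by Dickson's lemma, an increasing sequence `p n` of extremal
pairs with distinct ratios. Sub-pairs of an extremal pair with equal products are extremal, and
past some stage `N` every multiple of a difference `p n - p N` lies below a later `p m`; so the
product `b` of that difference satisfies `ρ(bᵏ) = ρ(b)` for all `k`, and its ratio is an
asymptotic elasticity, hence at least `r`. The mediant inequality then bounds `|z_n| - |z_N|`,
although `|z_n| → ∞`.
-/

instance Multiset.wellQuasiOrderedLE {α : Type*} [Finite α] : WellQuasiOrderedLE (Multiset α) := by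
  classical
  exact Finsupp.orderIsoMultiset.wellQuasiOrderedLE_iff.1 inferInstance

theorem Monotone.eventually_mul_tsub_le {f : ℕ → ℕ} (hf : Monotone f) :
    ∀ᶠ N in atTop, ∀ n k : ℕ, ∀ᶠ m in atTop, k * (f n - f N) ≤ f m := by
  by_cases hb : BddAbove (Set.range f)
  · obtain ⟨N, hN⟩ := Nat.sSup_mem (Set.range_nonempty f) hb
    refine eventually_atTop.2 ⟨N, fun N' hN' n k => Eventually.of_forall fun m => ?_⟩
    have : f n ≤ f N' := (le_csSup hb ⟨n, rfl⟩).trans (hN ▸ hf hN')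
    simp [Nat.sub_eq_zero_of_le this]
  · have hf' : Tendsto f atTop atTop :=
      tendsto_atTop_atTop_of_monotone hf fun b => by
        obtain ⟨_, ⟨m, rfl⟩, hm⟩ := not_bddAbove_iff.1 hb b
        exact ⟨m, hm.le⟩
    exact Eventually.of_forall fun N n k => hf'.eventually_ge_atTop _

theorem Monotone.eventually_nsmul_tsub_le {α : Type*} [Finite α] [DecidableEq α]
    {p : ℕ → Multiset α} (hp : Monotone p) :
    ∀ᶠ N in atTop, ∀ n k : ℕ, ∀ᶠ m in atTop, k • (p n - p N) ≤ p m := by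
  have hcount : ∀ a, ∀ᶠ N in atTop, ∀ n k : ℕ, ∀ᶠ m in atTop,
      k * ((p n).count a - (p N).count a) ≤ (p m).count a :=
    fun a => Monotone.eventually_mul_tsub_le fun _ _ h => Multiset.count_le_of_le a (hp h)
  filter_upwards [eventually_all.2 hcount] with N hN n k
  filter_upwards [eventually_all.2 fun a => hN a n k] with m hm
  exact Multiset.le_iff_count.2 fun a => by simpa [Multiset.count_nsmul] using hm a

theorem mul_le_mul_of_add_div_add_le_sub {a b c d ρ ε : ℝ} (ha : 0 ≤ a) (hb : 0 ≤ b)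
    (hc : 0 < c) (hρ : ρ ≤ d / c) (h : (b + d) / (a + c) ≤ ρ - ε) : ε * c ≤ (ρ - ε) * a := by
  rw [le_div_iff₀ hc] at hρ
  rw [div_le_iff₀ (by positivity)] at h
  nlinarith

abbrev Atom (M : Type*) [Monoid M] := {u : M // Irreducible u}

theorem Monoid.FG.finite_atom {M : Type*} [CommMonoid M] [Subsingleton Mˣ] (h : Monoid.FG M) :
    Finite (Atom M) := by
  obtain ⟨S, hS⟩ := h.fg_top
  have hmem : ∀ x ∈ Submonoid.closure (S : Set M), Irreducible x → x ∈ S := by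
    intro x hx
    induction hx using Submonoid.closure_induction with
    | mem x hx => exact fun _ => hx
    | one => exact fun h => (h.not_isUnit isUnit_one).elim
    | mul x y _ _ ihx ihy =>
      intro h
      rcases h.isUnit_or_isUnit rfl with hx | hy
      · rw [isUnit_iff_eq_one.1 hx, one_mul] at h ⊢
        exact ihy h
      · rw [isUnit_iff_eq_one.1 hy, mul_one] at h ⊢
        exact ihx h
  exact (S.finite_toSet.subset fun x hx => hmem x (hS ▸ Submonoid.mem_top x) hx).to_subtype

namespace Associates

theorem irreducible_mk' {H : Type*} [CommMonoid H] {a : H} :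
    Irreducible (Associates.mk a) ↔ Irreducible a := by
  simp only [irreducible_iff, isUnit_mk, forall_associated, mk_mul_mk,
    mk_eq_mk_iff_associated, Associated.comm (x := a)]
  refine Iff.rfl.and ⟨fun h x y hxy => h _ _ (hxy ▸ .refl _), ?_⟩
  rintro h x y ⟨u, rfl⟩
  simpa using h (mul_assoc _ _ _)

instance instCancelCommMonoid {H : Type*} [CancelCommMonoid H] :
    CancelCommMonoid (Associates H) where
  mul_left_cancel := by
    rintro ⟨a⟩ ⟨b⟩ ⟨c⟩ h
    obtain ⟨u, hu⟩ := Quotient.exact' h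
    exact Quotient.sound' ⟨u, mul_left_cancel (a := a) (by rwa [← mul_assoc])⟩

end Associates

section Associates

variable {H : Type*} [CommMonoid H]

theorem lengthSet_associates_mk (a : H) :
    lengthSet (Associates H) (Associates.mk a) = lengthSet H a := by
  by_cases ha : IsUnit a
  · rw [lengthSet, lengthSet, if_pos (Associates.isUnit_mk.2 ha), if_pos ha]
  rw [lengthSet, lengthSet, if_neg (Associates.isUnit_mk.not.2 ha), if_neg ha]
  ext k
  constructor
  · rintro ⟨F, hF, hprod⟩
    choose g hg using fun i => Associates.mk_surjective (F i)
    obtain ⟨u, hu⟩ : Associated (∏ i, g i) a := by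
      rw [← Associates.mk_eq_mk_iff_associated, hprod, ← Associates.mkMonoidHom_apply, map_prod]
      simp only [Associates.mkMonoidHom_apply, hg]
    cases k with
    | zero => exact (ha (Associates.mk_eq_one.1 (by simpa using hprod))).elim
    | succ k =>
      refine ⟨Fin.cons (g 0 * u) (Fin.tail g), Fin.cases ?_ fun i => ?_, ?_⟩
      · rw [Fin.prod_cons, ← hu, Fin.prod_univ_succ, mul_right_comm]
        rfl
      · exact (irreducible_mul_units u).2 (Associates.irreducible_mk'.1 (hg 0 ▸ hF 0))
      · exact Associates.irreducible_mk'.1 (hg i.succ ▸ hF i.succ)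
  · rintro ⟨f, hf, rfl⟩
    refine ⟨fun i => Associates.mk (f i), fun i => Associates.irreducible_mk'.2 (hf i), ?_⟩
    simp only [← Associates.mkMonoidHom_apply, map_prod]

theorem elasticity_associates_mk (a : H) :
    elasticity (Associates H) (Associates.mk a) = elasticity H a := by
  by_cases ha : IsUnit a
  · rw [elasticity, elasticity, if_pos (Associates.isUnit_mk.2 ha), if_pos ha]
  · rw [elasticity, elasticity, if_neg (Associates.isUnit_mk.not.2 ha), if_neg ha,
      lengthSet_associates_mk]

theorem asympSet_associates : asympSet (Associates H) = asympSet H := by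
  ext r
  simp only [asympSet, Set.mem_ofPred_eq, Associates.mk_surjective.exists, ← Associates.mk_pow,
    Associates.isUnit_mk, elasticity_associates_mk]

end Associates

section CommMonoid

variable {M : Type*} [CommMonoid M]

def atomProd (s : Multiset (Atom M)) : M := (s.map Subtype.val).prod

@[simp]
theorem atomProd_zero : atomProd (0 : Multiset (Atom M)) = 1 := by simp [atomProd]

@[simp]
theorem atomProd_add (s t : Multiset (Atom M)) : atomProd (s + t) = atomProd s * atomProd t := by
  simp [atomProd]

@[simp]
theorem atomProd_nsmul (k : ℕ) (s : Multiset (Atom M)) : atomProd (k • s) = atomProd s ^ k := by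
  simp [atomProd, Multiset.map_nsmul, Multiset.prod_nsmul]

@[simp]
theorem isUnit_atomProd_iff {s : Multiset (Atom M)} : IsUnit (atomProd s) ↔ s = 0 := by
  refine ⟨fun h => Multiset.eq_zero_of_forall_notMem fun u hu => u.2.not_isUnit ?_, ?_⟩
  · exact isUnit_of_dvd_unit (Multiset.dvd_prod (Multiset.mem_map_of_mem _ hu)) h
  · rintro rfl
    simp

theorem lengthSet_eq_image_card {a : M} (ha : ¬IsUnit a) :
    lengthSet M a = Multiset.card '' {s : Multiset (Atom M) | atomProd s = a} := by
  ext k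
  simp only [lengthSet, if_neg ha, Set.mem_ofPred_eq, Set.mem_image]
  constructor
  · rintro ⟨f, hf, rfl⟩
    refine ⟨Finset.univ.val.map fun i => ⟨f i, hf i⟩, ?_, by simp⟩
    simp [atomProd, Finset.prod_eq_multiset_prod, Function.comp_def]
  · rintro ⟨s, rfl, rfl⟩
    obtain ⟨l, rfl⟩ := Quot.exists_rep s
    refine ⟨fun i : Fin l.length => l[i.1].val, fun i => Subtype.property _, ?_⟩
    change _ = ∏ i : Fin l.length, Subtype.val l[i.1]
    simp [atomProd, Fin.prod_univ_fun_getElem]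

structure IsExtremalPair (s t : Multiset (Atom M)) : Prop where
  atomProd_eq : atomProd s = atomProd t
  card_le : ∀ s', atomProd s' = atomProd s → Multiset.card s ≤ Multiset.card s'
  le_card : ∀ t', atomProd t' = atomProd t → Multiset.card t' ≤ Multiset.card t

theorem IsExtremalPair.mono [DecidableEq (Atom M)] {s t s' t' : Multiset (Atom M)}
    (h : IsExtremalPair s t) (hs : s' ≤ s) (ht : t' ≤ t) (heq : atomProd s' = atomProd t') :
    IsExtremalPair s' t' := by
  have hs_add : s' + (s - s') = s := add_tsub_cancel_of_le hs
  have ht_add : t' + (t - t') = t := add_tsub_cancel_of_le ht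
  refine ⟨heq, fun s'' hs'' => ?_, fun t'' ht'' => ?_⟩
  · have := h.card_le (s'' + (s - s')) (by rw [atomProd_add, hs'', ← atomProd_add, hs_add])
    have hcard := congrArg Multiset.card hs_add
    rw [Multiset.card_add] at this hcard
    omega
  · have := h.le_card (t'' + (t - t')) (by rw [atomProd_add, ht'', ← atomProd_add, ht_add])
    have hcard := congrArg Multiset.card ht_add
    rw [Multiset.card_add] at this hcard
    omega

theorem IsExtremalPair.card_snd_eq {s t t' : Multiset (Atom M)} (h : IsExtremalPair s t)
    (h' : IsExtremalPair s t') : Multiset.card t = Multiset.card t' :=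
  le_antisymm (h'.le_card t (by rw [← h.atomProd_eq, h'.atomProd_eq]))
    (h.le_card t' (by rw [← h'.atomProd_eq, h.atomProd_eq]))

theorem IsExtremalPair.elasticity_eq {s t : Multiset (Atom M)} (h : IsExtremalPair s t)
    (hs : s ≠ 0) :
    elasticity M (atomProd s) = (Multiset.card t : ℝ) / Multiset.card s := by
  have hu : ¬IsUnit (atomProd s) := by simpa using hs
  have hmin : IsLeast (lengthSet M (atomProd s)) (Multiset.card s) := by
    rw [lengthSet_eq_image_card hu]
    exact ⟨⟨s, rfl, rfl⟩, by rintro _ ⟨s', hs', rfl⟩; exact h.card_le s' hs'⟩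
  have hmax : IsGreatest (lengthSet M (atomProd s)) (Multiset.card t) := by
    rw [lengthSet_eq_image_card hu]
    exact ⟨⟨t, h.atomProd_eq.symm, rfl⟩,
      by rintro _ ⟨t', ht', rfl⟩; exact h.le_card t' (ht'.trans h.atomProd_eq)⟩
  rw [elasticity, if_neg hu, hmin.csInf_eq, hmax.csSup_eq]

theorem card_div_card_mem_asympSet {s t : Multiset (Atom M)} (hs : s ≠ 0)
    (h : ∀ k : ℕ, IsExtremalPair (k • s) (k • t)) :
    (((Multiset.card t : ℝ) / Multiset.card s : ℝ) : EReal) ∈ asympSet M := by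
  refine ⟨atomProd s, by simpa using hs, tendsto_const_nhds.congr' ?_⟩
  filter_upwards [eventually_ge_atTop 1] with k hk
  have hks : k • s ≠ 0 := smul_ne_zero (by omega) hs
  rw [← atomProd_nsmul, (h k).elasticity_eq hks, Multiset.card_nsmul, Multiset.card_nsmul]
  push_cast
  rw [mul_div_mul_left _ _ (by positivity)]

end CommMonoid

section CancelCommMonoid

variable {M : Type*} [CancelCommMonoid M]

theorem atomProd_tsub_eq [DecidableEq (Atom M)] {s t s' t' : Multiset (Atom M)}
    (h : atomProd s = atomProd t) (h' : atomProd s' = atomProd t') (hs : s ≤ s') (ht : t ≤ t') :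
    atomProd (s' - s) = atomProd (t' - t) := by
  apply mul_left_cancel (a := atomProd s)
  rw [← atomProd_add, add_tsub_cancel_of_le hs, h', h, ← atomProd_add, add_tsub_cancel_of_le ht]

theorem finite_setOf_atomProd_eq [Finite (Atom M)] (a : M) :
    {s : Multiset (Atom M) | atomProd s = a}.Finite := by
  classical
  refine WellQuasiOrderedLE.finite_of_isAntichain fun s hs s' hs' hne hle => hne ?_
  have h1 : atomProd (s' - s) = 1 := by
    apply mul_left_cancel (a := atomProd s)
    rw [← atomProd_add, add_tsub_cancel_of_le hle, mul_one, hs, hs']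
  have h0 : s' - s = 0 := isUnit_atomProd_iff.1 (by rw [h1]; exact isUnit_one)
  rw [← add_tsub_cancel_of_le hle, h0, add_zero]

theorem exists_isExtremalPair [Finite (Atom M)] {a : M} (h0 : elasticity M a ≠ 0)
    (h1 : elasticity M a ≠ 1) :
    ∃ s t : Multiset (Atom M), IsExtremalPair s t ∧ s ≠ 0 ∧ atomProd s = a := by
  -- `ρ(a) ≠ 1` excludes units and `ρ(a) ≠ 0` excludes `L(a) = ∅` (where `ρ(a) = 0 / 0 = 0`),
  -- so no atomicity assumption is needed.
  have hu : ¬IsUnit a := fun hu => h1 (by simp [elasticity, hu])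
  have hne : (lengthSet M a).Nonempty := by
    by_contra he
    simp [elasticity, hu, Set.not_nonempty_iff_eq_empty.1 he] at h0
  have hfin : (lengthSet M a).Finite := by
    rw [lengthSet_eq_image_card hu]
    exact (finite_setOf_atomProd_eq a).image _
  rw [lengthSet_eq_image_card hu] at hne hfin
  obtain ⟨s, hs, hcs⟩ := Nat.sInf_mem hne
  obtain ⟨t, ht, hct⟩ := Nat.sSup_mem hne hfin.bddAbove
  refine ⟨s, t, ⟨hs.trans ht.symm, fun s' hs' => ?_, fun t' ht' => ?_⟩, ?_, hs⟩
  · rw [hcs]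
    exact Nat.sInf_le ⟨s', hs'.trans hs, rfl⟩
  · rw [hct]
    exact le_csSup hfin.bddAbove ⟨t', ht'.trans ht, rfl⟩
  · rintro rfl
    exact hu (hs ▸ isUnit_one)

end CancelCommMonoid

section Sequences

variable {M : Type*} [CancelCommMonoid M] [Finite (Atom M)]

theorem exists_monotone_seq_isExtremalPair {S : Set ℝ} (hS : S.Infinite)
    (hSρ : S ⊆ Set.range (elasticity M)) :
    ∃ p : ℕ → Multiset (Atom M) × Multiset (Atom M), Monotone p ∧
      StrictMono (fun n => (p n).1) ∧ (∀ n, IsExtremalPair (p n).1 (p n).2) ∧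
      ∀ n, (Multiset.card (p n).2 : ℝ) / Multiset.card (p n).1 ∈ S := by
  let e := (hS.sdiff (Set.toFinite {0, 1})).natEmbedding
  have hq : ∀ n, ∃ q : Multiset (Atom M) × Multiset (Atom M), IsExtremalPair q.1 q.2 ∧
      (Multiset.card q.2 : ℝ) / Multiset.card q.1 = e n := by
    intro n
    obtain ⟨hmem, hne⟩ := (e n).2
    obtain ⟨a, ha⟩ := hSρ hmem
    obtain ⟨s, t, h, hs, rfl⟩ :=
      exists_isExtremalPair (M := M) (a := a) (by rw [ha]; exact fun h0 => hne (by simp [h0]))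
        (by rw [ha]; exact fun h1 => hne (by simp [h1]))
    exact ⟨(s, t), h, (h.elasticity_eq hs).symm.trans ha⟩
  choose q hq hqe using hq
  obtain ⟨g, hg⟩ := wellQuasiOrdered_le.exists_monotone_subseq q
  refine ⟨q ∘ g, fun m n h => hg m n h, ?_, fun n => hq _, fun n => hqe _ ▸ (e _).2.1⟩
  refine Monotone.strictMono_of_injective (fun m n h => (hg m n h).1) fun m n hmn => ?_
  have hcard := (hq (g m)).card_snd_eq (hmn ▸ hq (g n))
  have hen : e (g m) = e (g n) := Subtype.ext <| by
    rw [← hqe, ← hqe]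
    simp only [Function.comp_apply] at hmn
    rw [hcard, hmn]
  exact g.injective (e.injective hen)

theorem exists_card_div_card_tsub_mem_asympSet [DecidableEq (Atom M)]
    {p : ℕ → Multiset (Atom M) × Multiset (Atom M)} (hp : Monotone p)
    (hp₁ : StrictMono (fun n => (p n).1)) (hext : ∀ n, IsExtremalPair (p n).1 (p n).2) :
    ∃ N, ∀ n, N < n → (((Multiset.card ((p n).2 - (p N).2) : ℝ) /
      Multiset.card ((p n).1 - (p N).1) : ℝ) : EReal) ∈ asympSet M := by
  obtain ⟨N, hN₁, hN₂⟩ := ((monotone_fst.comp hp).eventually_nsmul_tsub_le.and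
    (monotone_snd.comp hp).eventually_nsmul_tsub_le).exists
  refine ⟨N, fun n hn => card_div_card_mem_asympSet ?_ fun k => ?_⟩
  · exact (tsub_pos_of_lt (hp₁ hn)).ne'
  · obtain ⟨m, hm₁, hm₂⟩ := ((hN₁ n k).and (hN₂ n k)).exists
    refine (hext m).mono hm₁ hm₂ ?_
    rw [atomProd_nsmul, atomProd_nsmul, atomProd_tsub_eq (hext N).atomProd_eq
      (hext n).atomProd_eq (hp hn.le).1 (hp hn.le).2]

theorem finite_setOf_elasticity_le_sInf_asympSet_sub {ε : ℝ} (hε : 0 < ε) :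
    {x : ℝ | (∃ a : M, elasticity M a = x) ∧ (x : EReal) ≤ sInf (asympSet M) - ε}.Finite := by
  classical
  by_contra hS
  obtain ⟨p, hp, hp₁, hext, hpS⟩ := exists_monotone_seq_isExtremalPair hS fun x hx => hx.1
  obtain ⟨N, hN⟩ := exists_card_div_card_tsub_mem_asympSet hp hp₁ hext
  set r := sInf (asympSet M)
  have hr_top : r ≠ ⊤ := ne_top_of_le_ne_top (EReal.coe_ne_top _) (sInf_le (hN _ N.lt_succ_self))
  have hr_bot : r ≠ ⊥ := fun h => by simpa [h] using (hpS 0).2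
  obtain ⟨ρ, hρ⟩ : ∃ ρ : ℝ, r = ρ := ⟨r.toReal, (EReal.coe_toReal hr_top hr_bot).symm⟩
  set A := Multiset.card (p N).1
  set B := Multiset.card (p N).2
  set c := fun n => Multiset.card ((p n).1 - (p N).1)
  have hsplit : ∀ n, N ≤ n → A + c n = Multiset.card (p n).1 ∧
      B + Multiset.card ((p n).2 - (p N).2) = Multiset.card (p n).2 := fun n hn =>
    ⟨by rw [← Multiset.card_add, add_tsub_cancel_of_le (hp hn).1],
      by rw [← Multiset.card_add, add_tsub_cancel_of_le (hp hn).2]⟩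
  have hbound : ∀ n, N < n → ε * c n ≤ (ρ - ε) * A := by
    intro n hn
    have hratio := (hpS n).2
    rw [← (hsplit n hn.le).1, ← (hsplit n hn.le).2, hρ, ← EReal.coe_sub,
      EReal.coe_le_coe_iff] at hratio
    refine mul_le_mul_of_add_div_add_le_sub (d := Multiset.card ((p n).2 - (p N).2))
      A.cast_nonneg B.cast_nonneg ?_ ?_ (by exact_mod_cast hratio)
    · exact_mod_cast Multiset.card_pos.2 (tsub_pos_of_lt (hp₁ hn)).ne'
    · rw [← EReal.coe_le_coe_iff, ← hρ]
      exact sInf_le (hN n hn)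
  obtain ⟨n, hNn, hn⟩ := ((eventually_gt_atTop N).and
    (tendsto_natCast_atTop_atTop.eventually_gt_atTop (A + (ρ - ε) * A / ε))).exists
  have hcard : n ≤ A + c n :=
    (hsplit n hNn.le).1 ▸ (StrictMono.comp (fun _ _ h => Multiset.card_lt_card h) hp₁).id_le n
  have hc : (ρ - ε) * A / ε < c n := by
    have : (n : ℝ) ≤ A + c n := by exact_mod_cast hcard
    linarith
  rw [div_lt_iff₀ hε] at hc
  linarith [hbound n hNn]

end Sequences

/-- If `H_red = H/H^×` is finitely generated and `r = inf R̄(H)`, then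
`r` is the only possible limit point of `{ρ(a) : a ∈ H, 1 ≤ ρ(a) < r}`: for every
`ε > 0` the set of elasticities `≤ r - ε` is finite. -/
theorem statement3 (H : Type*) [CancelCommMonoid H]
    (hfg : Monoid.FG (Associates H)) (r : EReal) (hr : r = sInf (asympSet H))
    (ε : ℝ) (hε : 0 < ε) :
    {x : ℝ | (∃ a : H, elasticity H a = x) ∧ (x : EReal) ≤ r - (ε : EReal)}.Finite := by
  have : Finite (Atom (Associates H)) := hfg.finite_atom
  refine (finite_setOf_elasticity_le_sInf_asympSet_sub (M := Associates H) hε).subset ?_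
  rintro x ⟨⟨a, rfl⟩, hx⟩
  exact ⟨⟨Associates.mk a, elasticity_associates_mk a⟩, by rwa [asympSet_associates, ← hr]⟩
end

section
/- Let n ∈ ℕ and let a_1, …, a_n ∈ ℕ be positive integers. If there exist x_1, …, x_n ∈ ℕ₀ and an integer t ≥ 2 such that a_1 x_1 + … + a_n x_n = t · a_1 ⋯ a_n, then there exist x_i' ∈ [0, x_i] for all i ∈ [1, n] such that a_1 x_1' + … + a_n x_n' = a_1 ⋯ a_n. -/
open Filter Topology

private lemma mod_sub_char (A M z : ℕ) (hA : 0 < A) (hdvd : A ∣ M) (hz : z ≤ M) :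
    (M - z) % A = 0 ∨ (M - z) % A + z % A = A := by
  obtain ⟨m, rfl⟩ := hdvd
  have hd := Nat.div_add_mod z A
  set q := z / A with hq
  set r := z % A with hr
  have hrA : r < A := Nat.mod_lt _ hA
  rcases Nat.eq_zero_or_pos r with h0 | hpos
  · left
    have hdz : A ∣ z := Nat.dvd_of_mod_eq_zero h0
    have : A ∣ A * m - z := Nat.dvd_sub ⟨m, rfl⟩ hdz
    obtain ⟨c, hc⟩ := this
    rw [hc]
    exact Nat.mul_mod_right _ _
  · right
    have hqm : q + 1 ≤ m := by
      by_contra hc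
      push_neg at hc
      have : m ≤ q := by omega
      have : A * m ≤ A * q := Nat.mul_le_mul_left A this
      omega
    have e1 : A * (m - q - 1) + A = A * (m - q) := by
      rw [← Nat.mul_succ]; congr 1; omega
    have e2 : A * (m - q) + A * q = A * m := by
      rw [← Nat.mul_add]; congr 1; omega
    have key : A * m - z = A * (m - q - 1) + (A - r) := by omega
    rw [key, Nat.mul_add_mod, Nat.mod_eq_of_lt (by omega)]
    omega

private lemma pigeon (A B lo len : ℕ) (hA : 0 < A) (hlen : 0 < len) (hco : Nat.Coprime B A) :
    ∃ w, lo ≤ w ∧ w < lo + len ∧ ((B * w) % A = 0 ∨ len ≤ (B * w) % A) := by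
  rcases le_or_gt A len with hAlen | hAlen
  · refine ⟨A * ((lo + A - 1) / A), ?_, ?_,
      Or.inl (by rw [mul_comm B, Nat.mul_assoc]; exact Nat.mul_mod_right _ _)⟩
    · have := Nat.div_add_mod (lo + A - 1) A
      have := Nat.mod_lt (lo + A - 1) hA
      omega
    · have : A * ((lo + A - 1) / A) ≤ lo + A - 1 := Nat.mul_div_le _ _
      omega
  · by_contra hcon
    push_neg at hcon
    set f : ℕ → ℕ := fun w => (B * w) % A with hf
    have hinj : Set.InjOn f (Finset.Ico lo (lo + len)) := by
      intro w hw w' hw' he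
      simp only [Finset.coe_Ico, Set.mem_Ico] at hw hw'
      have hmod : B * w ≡ B * w' [MOD A] := he
      have hww : w ≡ w' [MOD A] := hmod.cancel_left_of_coprime (Nat.coprime_comm.mp hco)
      rcases le_or_gt w w' with h | h
      · have hd := (Nat.modEq_iff_dvd' h).mp hww
        rcases Nat.eq_zero_or_pos (w' - w) with h0 | hp
        · omega
        · have := Nat.le_of_dvd hp hd; omega
      · have hd := (Nat.modEq_iff_dvd' h.le).mp hww.symm
        rcases Nat.eq_zero_or_pos (w - w') with h0 | hp
        · omega
        · have := Nat.le_of_dvd hp hd; omega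
    have hsub : (Finset.Ico lo (lo + len)).image f ⊆ Finset.Ico 1 len := by
      intro t ht
      simp only [Finset.mem_image, Finset.mem_Ico] at ht ⊢
      obtain ⟨w, hw, rfl⟩ := ht
      have := hcon w hw.1 hw.2
      have h1 : f w ≠ 0 := this.1
      have h2 : f w < len := this.2
      omega
    have hcard : ((Finset.Ico lo (lo + len)).image f).card = len := by
      rw [Finset.card_image_of_injOn hinj, Nat.card_Ico]
      omega
    have := Finset.card_le_card hsub
    rw [hcard, Nat.card_Ico] at this
    omega

private lemma exists_rho (Q A u : ℕ) (hQ : 2 ≤ Q) (hco : Nat.Coprime A Q) :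
    ∃ ρ, ρ < Q ∧ (A * ρ) % Q = u % Q := by
  haveI : NeZero Q := ⟨by omega⟩
  set un := ZMod.unitOfCoprime A hco with hun
  refine ⟨((u : ZMod Q) * ((un⁻¹ : (ZMod Q)ˣ) : ZMod Q)).val, ZMod.val_lt _, ?_⟩
  have h2 : ((((u : ZMod Q) * ((un⁻¹ : (ZMod Q)ˣ) : ZMod Q)).val : ℕ) : ZMod Q) = (u : ZMod Q) * ((un⁻¹ : (ZMod Q)ˣ) : ZMod Q) := ZMod.natCast_rightInverse _
  apply (ZMod.natCast_eq_natCast_iff' _ _ _).mp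
  push_cast
  rw [h2]
  have h1 : ((un : ZMod Q)) = (A : ZMod Q) := ZMod.coe_unitOfCoprime A hco
  rw [← h1, mul_comm ((un : ZMod Q)) _, mul_assoc, ← Units.val_mul, inv_mul_cancel, Units.val_one, mul_one]


private lemma lemmaM {ι : Type*} [DecidableEq ι] :
    ∀ (N : ℕ) (s : Finset ι), s.card = N → ∀ (v x : ι → ℕ), (∀ i ∈ s, 0 < v i) → ∀ k : ℕ,
      (k + 1) * (∏ i ∈ s, v i) ≤ ∑ i ∈ s, v i * x i →
      ∃ y : ι → ℕ, (∀ i, y i ≤ x i) ∧ ∑ i ∈ s, v i * y i = k * ∏ i ∈ s, v i := by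
  intro N
  induction N using Nat.strong_induction_on with
  | _ N IH => ?_
  intro s hcard v x hv k hmass
  rcases Nat.eq_zero_or_pos k with rfl | hk
  · exact ⟨fun _ => 0, fun _ => Nat.zero_le _, by simp⟩
  rcases s.eq_empty_or_nonempty with rfl | hne
  · simp at hmass
  set P := ∏ i ∈ s, v i with hP
  set mass := ∑ i ∈ s, v i * x i with hmass_def
  have hPpos : 0 < P := Finset.prod_pos hv
  -- helper: single pivot
  have H1 : ∀ i ∈ s, ∀ w j : ℕ, w ≤ x i →
      v i * w + j * (∏ t ∈ s.erase i, v t) = k * P →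
      (j = 0 ∨ (j + 1) * (∏ t ∈ s.erase i, v t) ≤ ∑ t ∈ s.erase i, v t * x t) →
      ∃ y : ι → ℕ, (∀ t, y t ≤ x t) ∧ ∑ t ∈ s, v t * y t = k * P := by
    intro i hi w j hw heq hside
    have hcard' : (s.erase i).card < N := by
      rw [← hcard]
      exact Finset.card_erase_lt_of_mem hi
    have hrest : ∃ y' : ι → ℕ, (∀ t, y' t ≤ x t) ∧
        ∑ t ∈ s.erase i, v t * y' t = j * ∏ t ∈ s.erase i, v t := by
      rcases hside with rfl | hside
      · exact ⟨fun _ => 0, fun _ => Nat.zero_le _, by simp⟩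
      · exact IH _ hcard' _ rfl v x (fun t ht => hv t (Finset.mem_of_mem_erase ht)) j hside
    obtain ⟨y', hy'le, hy'sum⟩ := hrest
    refine ⟨Function.update y' i w, ?_, ?_⟩
    · intro t
      rcases eq_or_ne t i with rfl | hne'
      · rw [Function.update_self]; exact hw
      · rw [Function.update_of_ne hne']; exact hy'le t
    · rw [← Finset.add_sum_erase s _ hi, Function.update_self]
      have : ∑ t ∈ s.erase i, v t * Function.update y' i w t
          = ∑ t ∈ s.erase i, v t * y' t := by
        apply Finset.sum_congr rfl
        intro t ht
        rw [Function.update_of_ne (Finset.ne_of_mem_erase ht)]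
      rw [this, hy'sum, heq]
  -- helper: double pivot
  have H2 : ∀ i₁ ∈ s, ∀ i₂ ∈ s.erase i₁, ∀ w₁ w₂ j : ℕ, w₁ ≤ x i₁ → w₂ ≤ x i₂ →
      v i₁ * w₁ + v i₂ * w₂ + j * (∏ t ∈ (s.erase i₁).erase i₂, v t) = k * P →
      (j = 0 ∨ (j + 1) * (∏ t ∈ (s.erase i₁).erase i₂, v t)
        ≤ ∑ t ∈ (s.erase i₁).erase i₂, v t * x t) →
      ∃ y : ι → ℕ, (∀ t, y t ≤ x t) ∧ ∑ t ∈ s, v t * y t = k * P := by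
    intro i₁ hi₁ i₂ hi₂ w₁ w₂ j hw₁ hw₂ heq hside
    have hcard' : ((s.erase i₁).erase i₂).card < N := by
      rw [← hcard]
      calc ((s.erase i₁).erase i₂).card < (s.erase i₁).card :=
            Finset.card_erase_lt_of_mem hi₂
        _ ≤ s.card := Finset.card_le_card (Finset.erase_subset _ _)
    have hrest : ∃ y' : ι → ℕ, (∀ t, y' t ≤ x t) ∧
        ∑ t ∈ (s.erase i₁).erase i₂, v t * y' t = j * ∏ t ∈ (s.erase i₁).erase i₂, v t := by
      rcases hside with rfl | hside
      · exact ⟨fun _ => 0, fun _ => Nat.zero_le _, by simp⟩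
      · exact IH _ hcard' _ rfl v x
          (fun t ht => hv t (Finset.mem_of_mem_erase (Finset.mem_of_mem_erase ht))) j hside
    obtain ⟨y', hy'le, hy'sum⟩ := hrest
    have hne12 : i₂ ≠ i₁ := Finset.ne_of_mem_erase hi₂
    refine ⟨Function.update (Function.update y' i₁ w₁) i₂ w₂, ?_, ?_⟩
    · intro t
      rcases eq_or_ne t i₂ with rfl | h2
      · rw [Function.update_self]; exact hw₂
      rcases eq_or_ne t i₁ with rfl | h1
      · rw [Function.update_of_ne h2, Function.update_self]; exact hw₁
      · rw [Function.update_of_ne h2, Function.update_of_ne h1]; exact hy'le t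
    · rw [← Finset.add_sum_erase s _ hi₁, ← Finset.add_sum_erase _ _ hi₂]
      have e1 : Function.update (Function.update y' i₁ w₁) i₂ w₂ i₁ = w₁ := by
        rw [Function.update_of_ne (Ne.symm hne12), Function.update_self]
      have e2 : Function.update (Function.update y' i₁ w₁) i₂ w₂ i₂ = w₂ :=
        Function.update_self _ _ _
      have e3 : ∑ t ∈ (s.erase i₁).erase i₂, v t * Function.update (Function.update y' i₁ w₁) i₂ w₂ t
          = ∑ t ∈ (s.erase i₁).erase i₂, v t * y' t := by
        apply Finset.sum_congr rfl
        intro t ht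
        rw [Function.update_of_ne (Finset.ne_of_mem_erase ht),
          Function.update_of_ne (Finset.ne_of_mem_erase (Finset.mem_of_mem_erase ht))]
      rw [e1, e2, e3, hy'sum]
      linarith [heq]
  -- case B : some coordinate can carry everything
  by_cases hB : ∃ i ∈ s, k * (∏ t ∈ s.erase i, v t) ≤ x i
  · obtain ⟨i, hi, hxi⟩ := hB
    refine H1 i hi (k * ∏ t ∈ s.erase i, v t) 0 hxi ?_ (Or.inl rfl)
    rw [hP, ← Finset.mul_prod_erase s v hi]
    ring
  push_neg at hB
  -- case C : some erased set is rich enough on its own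
  by_cases hC : ∃ i ∈ s, k * P + (∏ t ∈ s.erase i, v t) ≤ ∑ t ∈ s.erase i, v t * x t
  · obtain ⟨i, hi, hrich⟩ := hC
    refine H1 i hi 0 (k * v i) (Nat.zero_le _) ?_ (Or.inr ?_)
    · rw [mul_zero, zero_add, mul_assoc, Finset.mul_prod_erase s v hi, ← hP]
    · calc (k * v i + 1) * (∏ t ∈ s.erase i, v t)
          = k * (v i * ∏ t ∈ s.erase i, v t) + ∏ t ∈ s.erase i, v t := by ring
        _ = k * P + ∏ t ∈ s.erase i, v t := by rw [Finset.mul_prod_erase s v hi, ← hP]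
        _ ≤ _ := hrich
  push_neg at hC
  -- case D : some value is non-coprime with the rest
  by_cases hD : ∃ i ∈ s, 2 ≤ Nat.gcd (v i) (∏ t ∈ s.erase i, v t)
  · obtain ⟨i, hi, hgcd⟩ := hD
    set Qi := ∏ t ∈ s.erase i, v t with hQi
    have hQipos : 0 < Qi := Finset.prod_pos (fun t ht => hv t (Finset.mem_of_mem_erase ht))
    have hvipos : 0 < v i := hv i hi
    set g := Nat.gcd (v i) Qi with hg
    have hgv : g ∣ v i := Nat.gcd_dvd_left _ _
    have hgQ : g ∣ Qi := Nat.gcd_dvd_right _ _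
    set step := Qi / g with hstep
    have hstepg : step * g = Qi := Nat.div_mul_cancel hgQ
    have hsteppos : 0 < step := by
      rcases Nat.eq_zero_or_pos step with h0 | h
      · rw [h0] at hstepg; omega
      · exact h
    set w := step * (x i / step) with hw
    have hdm : step * (x i / step) + x i % step = x i := Nat.div_add_mod _ _
    have hwle : w ≤ x i := by omega
    have hxlt : x i < k * Qi := hB i hi
    have hPi : v i * Qi = P := by rw [hP]; exact Finset.mul_prod_erase s v hi
    obtain ⟨vg, hvg⟩ := hgv
    have hvg1 : 1 ≤ vg := by
      rcases Nat.eq_zero_or_pos vg with h0 | h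
      · rw [h0, mul_zero] at hvg; omega
      · exact h
    have hvi2 : vg + 1 ≤ v i := by
      have t1 : 2 * vg ≤ v i := by rw [hvg]; exact Nat.mul_le_mul_right vg hgcd
      omega
    have hvstep : v i * step = Qi * vg := by rw [hvg, ← hstepg]; ring
    have hδ : x i % step < step := Nat.mod_lt _ hsteppos
    have k1 : v i * (x i % step) + v i ≤ Qi * vg := by
      calc v i * (x i % step) + v i = v i * (x i % step + 1) := by ring
        _ ≤ v i * step := Nat.mul_le_mul_left _ (by omega)
        _ = Qi * vg := hvstep
    have k2 : Qi * vg + Qi ≤ P := by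
      calc Qi * vg + Qi = Qi * (vg + 1) := by ring
        _ ≤ Qi * v i := Nat.mul_le_mul_left _ hvi2
        _ = P := by rw [mul_comm]; exact hPi
    have hdvd1 : Qi ∣ v i * w := ⟨vg * (x i / step), by rw [hw, hvg, ← hstepg]; ring⟩
    have hdvd2 : Qi ∣ k * P := Dvd.dvd.mul_left ⟨v i, by rw [← hPi]; ring⟩ k
    have hvwlt : v i * w + 1 ≤ k * P := by
      have h1 : v i * w ≤ v i * x i := Nat.mul_le_mul_left _ hwle
      have h2 : v i * x i + v i ≤ v i * (k * Qi) := by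
        calc v i * x i + v i = v i * (x i + 1) := by ring
          _ ≤ v i * (k * Qi) := Nat.mul_le_mul_left _ (by omega)
      have h3 : v i * (k * Qi) = k * P := by rw [← hPi]; ring
      omega
    set j := (k * P - v i * w) / Qi with hj
    have hjQ : j * Qi = k * P - v i * w := Nat.div_mul_cancel (Nat.dvd_sub hdvd2 hdvd1)
    have hjQ' : j * Qi + v i * w = k * P := by
      rw [hjQ]; omega
    have hxsplit : v i * x i = v i * w + v i * (x i % step) := by
      calc v i * x i = v i * (step * (x i / step) + x i % step) := by rw [hdm]
        _ = v i * w + v i * (x i % step) := by rw [hw]; ring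
    have hsplit : v i * x i + ∑ t ∈ s.erase i, v t * x t = mass :=
      Finset.add_sum_erase s (fun t => v t * x t) hi
    refine H1 i hi w j hwle (by rw [← hQi]; linarith [hjQ']) (Or.inr ?_)
    rw [← hQi]
    have hexp : (j + 1) * Qi = j * Qi + Qi := by ring
    have hPmass : k * P + P ≤ mass := by
      have : (k + 1) * P = k * P + P := by ring
      linarith [hmass]
    linarith [hjQ', hexp, hxsplit, hsplit, k1, k2, hPmass]
  push_neg at hD
  -- case E : all values coprime to the rest
  obtain ⟨iA, hiA, hmaxA⟩ := s.exists_max_image v hne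
  have hApos : 0 < v iA := hv iA hiA
  have hQApos : 0 < ∏ t ∈ s.erase iA, v t :=
    Finset.prod_pos (fun t ht => hv t (Finset.mem_of_mem_erase ht))
  have hPA : v iA * ∏ t ∈ s.erase iA, v t = P := by rw [hP]; exact Finset.mul_prod_erase s v hiA
  have hcopA : Nat.Coprime (v iA) (∏ t ∈ s.erase iA, v t) := by
    have h1 := hD iA hiA
    have h2 : 0 < Nat.gcd (v iA) (∏ t ∈ s.erase iA, v t) :=
      Nat.gcd_pos_of_pos_left _ hApos
    unfold Nat.Coprime
    omega
  by_cases hQA1 : (∏ t ∈ s.erase iA, v t) = 1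
  · -- E-Q1 : the rest of the max multiplies to 1
    have hxA : x iA < k := by
      have := hB iA hiA
      rwa [hQA1, mul_one] at this
    have hPA' : P = v iA := by rw [← hPA, hQA1, mul_one]
    have hAx : v iA * x iA + v iA ≤ k * P := by
      have h1 : v iA * (x iA + 1) ≤ v iA * k := Nat.mul_le_mul_left _ (by omega)
      have h2 : v iA * k = k * P := by rw [hPA']; ring
      have h3 : v iA * (x iA + 1) = v iA * x iA + v iA := by ring
      omega
    refine H1 iA hiA (x iA) (k * P - v iA * x iA) le_rfl ?_ (Or.inr ?_)
    · rw [hQA1, mul_one]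
      omega
    · rw [hQA1, mul_one]
      have hsplitA : v iA * x iA + ∑ t ∈ s.erase iA, v t * x t = mass :=
        Finset.add_sum_erase s (fun t => v t * x t) hiA
      have hP1 : (k + 1) * P = k * P + P := by ring
      omega
  -- now the second largest
  have hne2 : (s.erase iA).Nonempty := by
    rw [Finset.nonempty_iff_ne_empty]
    intro hemp
    rw [hemp, Finset.prod_empty] at hQA1
    exact hQA1 rfl
  obtain ⟨iB, hiB, hmaxB⟩ := (s.erase iA).exists_max_image v hne2
  have hiBs : iB ∈ s := Finset.mem_of_mem_erase hiB
  have hBpos : 0 < v iB := hv iB hiBs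
  have hQBQ : v iB * ∏ t ∈ (s.erase iA).erase iB, v t = ∏ t ∈ s.erase iA, v t :=
    Finset.mul_prod_erase _ v hiB
  set Q := ∏ t ∈ (s.erase iA).erase iB, v t with hQdef
  have hQpos : 0 < Q :=
    Finset.prod_pos (fun t ht => hv t (Finset.mem_of_mem_erase (Finset.mem_of_mem_erase ht)))
  have hPABQ : v iA * (v iB * Q) = P := by rw [hQBQ]; exact hPA
  -- B ≥ 2
  have hB2 : 2 ≤ v iB := by
    by_contra hc
    push_neg at hc
    have hall1 : ∀ t ∈ s.erase iA, v t = 1 := by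
      intro t ht
      have h1 := hmaxB t ht
      have h2 := hv t (Finset.mem_of_mem_erase ht)
      omega
    have : ∏ t ∈ s.erase iA, v t = 1 := Finset.prod_eq_one hall1
    exact hQA1 this
  -- A > B
  have hdvdB : v iB ∣ ∏ t ∈ s.erase iA, v t := Finset.dvd_prod_of_mem v hiB
  have hAB : v iB < v iA := by
    have h1 : v iB ≤ v iA := hmaxA iB hiBs
    rcases lt_or_eq_of_le h1 with h | h
    · exact h
    · exfalso
      have hdg : v iB ∣ Nat.gcd (v iA) (∏ t ∈ s.erase iA, v t) :=
        Nat.dvd_gcd (by rw [← h]) hdvdB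
      have h2 := Nat.le_of_dvd (Nat.gcd_pos_of_pos_left _ hApos) hdg
      have h3 := hD iA hiA
      omega
  have hcopAB : Nat.Coprime (v iA) (v iB) := Nat.Coprime.coprime_dvd_right hdvdB hcopA
  have hdvdQ : Q ∣ ∏ t ∈ s.erase iA, v t := ⟨v iB, by rw [mul_comm]; exact hQBQ.symm⟩
  have hcopAQ : Nat.Coprime (v iA) Q := Nat.Coprime.coprime_dvd_right hdvdQ hcopA
  have hiAiB : iA ≠ iB := by
    intro h
    rw [h] at hAB
    omega
  have hiAeB : iA ∈ s.erase iB := Finset.mem_erase.mpr ⟨hiAiB, hiA⟩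
  have herasecomm : (s.erase iB).erase iA = (s.erase iA).erase iB := by
    ext t; simp only [Finset.mem_erase]; tauto
  have hQiB : ∏ t ∈ s.erase iB, v t = v iA * Q := by
    rw [← Finset.mul_prod_erase (s.erase iB) v hiAeB, herasecomm]
  -- bounds
  have hxA_lt : x iA < k * (v iB * Q) := by
    have := hB iA hiA
    rwa [← hQBQ] at this
  have hxB_lt : x iB < k * (v iA * Q) := by
    have := hB iB hiBs
    rwa [hQiB] at this
  -- mass splitting
  have hsplit2 : v iA * x iA + (v iB * x iB + ∑ t ∈ (s.erase iA).erase iB, v t * x t) = mass := by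
    rw [Finset.add_sum_erase _ (fun t => v t * x t) hiB]
    exact Finset.add_sum_erase s (fun t => v t * x t) hiA
  have hP1 : (k + 1) * P = k * P + P := by ring
  by_cases hQ1 : Q = 1
  · -- C2 : two coins and pennies
    have hPAB : v iA * v iB = P := by rw [← hPABQ, hQ1]; ring
    have hxA2 : x iA < k * v iB := by rw [hQ1, mul_one] at hxA_lt; exact hxA_lt
    have hxB2 : x iB < k * v iA := by rw [hQ1, mul_one] at hxB_lt; exact hxB_lt
    have hAxlt : v iA * x iA + v iA ≤ k * P := by
      have h1 : v iA * (x iA + 1) ≤ v iA * (k * v iB) := Nat.mul_le_mul_left _ (by omega)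
      have h2 : v iA * (k * v iB) = k * P := by rw [← hPAB]; ring
      have h3 : v iA * (x iA + 1) = v iA * x iA + v iA := by ring
      omega
    obtain ⟨z, hzdef⟩ : ∃ z, v iA * x iA + z = k * P := ⟨k * P - v iA * x iA, by omega⟩
    have hzpos : v iA ≤ z := by omega
    obtain ⟨lo, r3, hr3, hloeq⟩ : ∃ lo r, r < v iB ∧ v iB * lo + r = z + v iB - 1 :=
      ⟨(z + v iB - 1) / v iB, (z + v iB - 1) % v iB, Nat.mod_lt _ (by omega),
        Nat.div_add_mod _ _⟩
    have hlo1 : z ≤ v iB * lo := by omega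
    have hlo2 : v iB * lo ≤ z + v iB - 1 := by omega
    by_cases hxBlo : x iB < lo
    · -- case (i): use all of both coins, pennies fill
      have hBxB : v iB * x iB + v iB ≤ v iB * lo := by
        have h1 : v iB * (x iB + 1) ≤ v iB * lo := Nat.mul_le_mul_left _ (by omega)
        have he : v iB * (x iB + 1) = v iB * x iB + v iB := by ring
        omega
      refine H2 iA hiA iB hiB (x iA) (x iB) (k * P - (v iA * x iA + v iB * x iB))
        le_rfl le_rfl ?_ (Or.inr ?_)
      · rw [← hQdef, hQ1, mul_one]; omega
      · rw [← hQdef, hQ1, mul_one]; omega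
    push_neg at hxBlo
    obtain ⟨W, hWdef⟩ : ∃ W, lo + W = x iB + 1 := ⟨x iB + 1 - lo, by omega⟩
    have hWpos : 0 < W := by omega
    obtain ⟨wB, hwB1, hwB2, hwB3⟩ := pigeon (v iA) (v iB) lo W hApos hWpos hcopAB.symm
    have hwBxB : wB ≤ x iB := by omega
    have hBwB_z : z ≤ v iB * wB := by
      have := Nat.mul_le_mul_left (v iB) hwB1
      omega
    have hBwB_lt : v iB * wB + v iB ≤ k * P := by
      have h1 : v iB * (wB + 1) ≤ v iB * (k * v iA) := Nat.mul_le_mul_left _ (by omega)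
      have h2 : v iB * (k * v iA) = k * P := by rw [← hPAB]; ring
      have h3 : v iB * (wB + 1) = v iB * wB + v iB := by ring
      omega
    obtain ⟨u, hudef⟩ : ∃ u, v iB * wB + u = k * P := ⟨k * P - v iB * wB, by omega⟩
    have huA : u ≤ v iA * x iA := by omega
    obtain ⟨wA, l, hlA, hdm4⟩ : ∃ wA l, l < v iA ∧ v iA * wA + l = u :=
      ⟨u / v iA, u % v iA, Nat.mod_lt _ hApos, Nat.div_add_mod _ _⟩
    have hwAxA : wA ≤ x iA := by
      by_contra hc
      push_neg at hc
      have h1 : v iA * (x iA + 1) ≤ v iA * wA := Nat.mul_le_mul_left _ (by omega)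
      have h2 : v iA * (x iA + 1) = v iA * x iA + v iA := by ring
      omega
    have hlmod : u % v iA = l := by
      rw [← hdm4, Nat.mul_add_mod, Nat.mod_eq_of_lt hlA]
    -- characterize l
    have hAdvd_kP : v iA ∣ k * P := Dvd.dvd.mul_left ⟨v iB * Q, hPABQ.symm⟩ k
    have hueq : k * P - v iB * wB = u := by omega
    have hlchar := mod_sub_char (v iA) (k * P) (v iB * wB) hApos hAdvd_kP (by omega)
    rw [hueq, hlmod] at hlchar
    refine H2 iA hiA iB hiB wA wB l hwAxA hwBxB ?_ ?_
    · rw [← hQdef, hQ1, mul_one]; omega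
    · rcases hlchar with h0 | hsum
      · exact Or.inl h0
      rcases hwB3 with h0' | hge
      · rw [h0'] at hsum
        exact Or.inl (by omega)
      by_cases hlr : l + 1 ≤ ∑ t ∈ (s.erase iA).erase iB, v t * x t
      · refine Or.inr ?_
        rw [← hQdef, hQ1, mul_one]
        omega
      exfalso
      push_neg at hlr
      -- contradiction computation
      obtain ⟨a', ha'⟩ : ∃ a', v iA = a' + 1 := ⟨v iA - 1, by omega⟩
      obtain ⟨b', hb'⟩ : ∃ b', v iB = b' + 1 := ⟨v iB - 1, by omega⟩
      have hPexp : P = a' * b' + a' + b' + 1 := by rw [← hPAB, ha', hb']; ring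
      have hmlt : (v iB * wB) % v iA < v iA := Nat.mod_lt _ hApos
      have hWa : W ≤ a' := by omega
      have he1 : v iB * x iB + v iB = v iB * lo + v iB * W := by
        calc v iB * x iB + v iB = v iB * (x iB + 1) := by ring
          _ = v iB * (lo + W) := by rw [hWdef]
          _ = v iB * lo + v iB * W := by ring
      have he2 : v iB * W = b' * W + W := by rw [hb']; ring
      have he3 : b' * W ≤ b' * a' := Nat.mul_le_mul_left _ hWa
      have he4 : b' * a' = a' * b' := by ring
      have c2 : ∑ t ∈ (s.erase iA).erase iB, v t * x t ≤ l := by omega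
      have c3 : l + W ≤ v iA := by omega
      have c1 : v iB * x iB + 1 ≤ z + v iB * W := by omega
      have c4 : k * P + P ≤ mass := by omega
      have c5 : mass ≤ v iA * x iA + v iB * x iB + ∑ t ∈ (s.erase iA).erase iB, v t * x t := by
        omega
      have c6 : P + 1 ≤ v iB * W + l := by omega
      have c7 : P ≤ b' * W + a' := by omega
      omega
  · -- C1 : two coins and a real rest
    have hQ2 : 2 ≤ Q := by omega
    -- find a rest coordinate with value ≥ 2
    obtain ⟨rr, hrr, hrr2⟩ : ∃ t ∈ (s.erase iA).erase iB, 2 ≤ v t := by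
      by_contra hc
      push_neg at hc
      have : ∏ t ∈ (s.erase iA).erase iB, v t = 1 := Finset.prod_eq_one (by
        intro t ht
        have h1 := hc t ht
        have h2 := hv t (Finset.mem_of_mem_erase (Finset.mem_of_mem_erase ht))
        omega)
      rw [← hQdef] at this
      exact hQ1 this
    have hrrs : rr ∈ s := Finset.mem_of_mem_erase (Finset.mem_of_mem_erase hrr)
    -- B ≥ 3
    have hrrB : v rr < v iB := by
      have h1 : v rr ≤ v iB := hmaxB rr (Finset.mem_of_mem_erase hrr)
      rcases lt_or_eq_of_le h1 with h | h
      · exact h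
      · exfalso
        have hrrB' : rr ∈ s.erase iB := by
          apply Finset.mem_of_mem_erase (a := iA)
          rw [herasecomm]
          exact hrr
        have hdvdrr : v rr ∣ ∏ t ∈ s.erase iB, v t := Finset.dvd_prod_of_mem v hrrB'
        have hdg : v iB ∣ Nat.gcd (v iB) (∏ t ∈ s.erase iB, v t) :=
          Nat.dvd_gcd dvd_rfl (by rw [← h]; exact hdvdrr)
        have h2 := Nat.le_of_dvd (Nat.gcd_pos_of_pos_left _ hBpos) hdg
        have h3 := hD iB hiBs
        omega
    have hB3 : 3 ≤ v iB := by omega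
    have hA4 : 4 ≤ v iA := by omega
    -- key product facts
    have hprod3 : 3 * (v iA * Q) ≤ P := by
      have h1 : (v iA * Q) * 3 ≤ (v iA * Q) * v iB := Nat.mul_le_mul_left _ hB3
      have h2 : (v iA * Q) * v iB = P := by rw [← hPABQ]; ring
      omega
    have hkey1 : v iA * Q + v iB * Q ≤ P := by
      have t1 : (v iA * Q) * 2 ≤ (v iA * Q) * v iB := Nat.mul_le_mul_left _ (by omega)
      have t2 : (v iB * Q) * 2 ≤ (v iB * Q) * v iA := Nat.mul_le_mul_left _ (by omega)
      have t3 : (v iA * Q) * v iB = P := by rw [← hPABQ]; ring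
      have t4 : (v iB * Q) * v iA = P := by rw [← hPABQ]; ring
      omega
    -- heavies
    have hsplitA : v iA * x iA + ∑ t ∈ s.erase iA, v t * x t = mass :=
      Finset.add_sum_erase s (fun t => v t * x t) hiA
    have hheavyA : mass + 1 ≤ v iA * x iA + k * P + v iB * Q := by
      have h1 := hC iA hiA
      rw [← hQBQ] at h1
      omega
    have hxAQ : Q + 1 ≤ x iA := by
      have h1 : v iA * Q + 1 ≤ v iA * x iA := by omega
      by_contra hc
      push_neg at hc
      have h2 : v iA * x iA ≤ v iA * Q := Nat.mul_le_mul_left _ (by omega)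
      omega
    -- rest mass lower bound
    have hsplitrr : v rr * x rr + ∑ t ∈ s.erase rr, v t * x t = mass :=
      Finset.add_sum_erase s (fun t => v t * x t) hrrs
    have hrrP : v rr * ∏ t ∈ s.erase rr, v t = P := by
      rw [hP]; exact Finset.mul_prod_erase s v hrrs
    have hQrr2 : 2 * (∏ t ∈ s.erase rr, v t) ≤ P := by
      have := Nat.mul_le_mul_right (∏ t ∈ s.erase rr, v t) hrr2
      omega
    have hrr_le : v rr * x rr ≤ ∑ t ∈ (s.erase iA).erase iB, v t * x t :=
      Finset.single_le_sum (f := fun t => v t * x t) (fun t _ => Nat.zero_le _) hrr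
    have hheavyrr : mass + 1 ≤ v rr * x rr + k * P + ∏ t ∈ s.erase rr, v t := by
      have h1 := hC rr hrrs
      omega
    have hrest_ge : v iA * Q + 1 ≤ ∑ t ∈ (s.erase iA).erase iB, v t * x t := by
      -- 2*restsum ≥ P + 2 ≥ 3AQ/..  and 3AQ ≤ P
      have h1 : mass + 1 ≤ (∑ t ∈ (s.erase iA).erase iB, v t * x t) + k * P +
          ∏ t ∈ s.erase rr, v t := by omega
      omega
    have hxA1 : v iA * Q + 1 ≤ v iA * x iA := by omega
    have hBleAQ : v iB ≤ v iA * Q := by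
      have h1 : v iA * 1 ≤ v iA * Q := Nat.mul_le_mul_left _ (by omega)
      omega
    have hPkP : P ≤ k * P := by
      have := Nat.mul_le_mul_right P hk
      omega
    have hQleBQ : Q ≤ v iB * Q := Nat.le_mul_of_pos_left Q hBpos
    -- common construction for branch a
    have KEY : ∀ wB u : ℕ, v iB * wB + u = k * P → wB ≤ x iB → 1 ≤ u →
        u ≤ v iA * x iA → v iA * Q ≤ u + v iA →
        ∃ y : ι → ℕ, (∀ t, y t ≤ x t) ∧ ∑ t ∈ s, v t * y t = k * P := by
      intro wB u hudef hwBxB hu_pos hu_le huQ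
      obtain ⟨d, l0, hl0, hddef⟩ : ∃ d l0, l0 < v iA ∧ v iA * d + l0 = u :=
        ⟨u / v iA, u % v iA, Nat.mod_lt _ hApos, Nat.div_add_mod _ _⟩
      have hd_xA : d ≤ x iA := by
        by_contra hc
        push_neg at hc
        have h1 : v iA * (x iA + 1) ≤ v iA * d := Nat.mul_le_mul_left _ (by omega)
        have h2 : v iA * (x iA + 1) = v iA * x iA + v iA := by ring
        omega
      have hdQ : Q ≤ d + 1 := by
        by_contra hc
        push_neg at hc
        have h1 : v iA * (d + 2) ≤ v iA * Q := Nat.mul_le_mul_left _ (by omega)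
        have h2 : v iA * (d + 2) = v iA * d + 2 * v iA := by ring
        omega
      obtain ⟨ρ, hρlt, hρmod⟩ := exists_rho Q (v iA) u hQ2 hcopAQ
      have hρd : ρ ≤ d := by omega
      obtain ⟨m6, r6, hr6, hm6⟩ : ∃ m r, r < Q ∧ Q * m + r = d - ρ :=
        ⟨(d - ρ) / Q, (d - ρ) % Q, Nat.mod_lt _ (by omega), Nat.div_add_mod _ _⟩
      have hd_eq : d = (ρ + Q * m6) + r6 := by omega
      have hwAxA : ρ + Q * m6 ≤ x iA := by omega
      have hAwA_mod : (v iA * (ρ + Q * m6)) % Q = u % Q := by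
        have h1 : v iA * (ρ + Q * m6) = v iA * ρ + Q * (v iA * m6) := by ring
        rw [h1, Nat.add_mul_mod_self_left, hρmod]
      have hAwA_le : v iA * (ρ + Q * m6) ≤ u := by
        have h1 : v iA * (ρ + Q * m6) ≤ v iA * d := Nat.mul_le_mul_left _ (by omega)
        omega
      obtain ⟨l, hldef⟩ : ∃ l, v iA * (ρ + Q * m6) + l = u :=
        ⟨u - v iA * (ρ + Q * m6), by omega⟩
      have hQl : Q ∣ l := by
        have hme : v iA * (ρ + Q * m6) ≡ u [MOD Q] := hAwA_mod
        have hdd := (Nat.modEq_iff_dvd' hAwA_le).mp hme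
        have he : u - v iA * (ρ + Q * m6) = l := by omega
        rwa [he] at hdd
      obtain ⟨j, hj⟩ := hQl
      have he8 : v iA * d = v iA * (ρ + Q * m6) + v iA * r6 := by rw [hd_eq]; ring
      have he9 : l = l0 + v iA * r6 := by omega
      have he10 : v iA * r6 + v iA ≤ v iA * Q := by
        have h1 : v iA * (r6 + 1) ≤ v iA * Q := Nat.mul_le_mul_left _ (by omega)
        have h2 : v iA * (r6 + 1) = v iA * r6 + v iA := by ring
        omega
      have hl_lt : l + 1 ≤ v iA * Q := by omega
      have hlQ : l + Q ≤ v iA * Q := by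
        have hjA : Q * (j + 1) ≤ Q * v iA := by
          apply Nat.mul_le_mul_left
          by_contra hc
          push_neg at hc
          have h1 : Q * v iA ≤ Q * j := Nat.mul_le_mul_left _ (by omega)
          have h2 : Q * v iA = v iA * Q := by ring
          omega
        have h1 : Q * (j + 1) = l + Q := by rw [hj]; ring
        have h2 : Q * v iA = v iA * Q := by ring
        omega
      refine H2 iA hiA iB hiB (ρ + Q * m6) wB j hwAxA hwBxB ?_ (Or.inr ?_)
      · rw [← hQdef]
        have h1 : j * Q = l := by rw [hj]; ring
        omega
      · rw [← hQdef]
        have h1 : (j + 1) * Q = l + Q := by rw [hj]; ring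
        omega
    by_cases hm : k * P ≤ v iA * x iA + v iB * x iB
    · -- branch a
      rcases le_or_gt (k * P) (v iA * x iA) with hAk | hAk
      · -- a1 : coin A alone is enough
        refine KEY 0 (k * P) (by omega) (Nat.zero_le _) (by omega) hAk (by omega)
      · -- a2
        obtain ⟨z, hz1, hz2⟩ : ∃ z, v iA * x iA + z = k * P ∧ z ≤ v iB * x iB :=
          ⟨k * P - v iA * x iA, by omega, by omega⟩
        obtain ⟨wB, r5, hr5, hwBeq⟩ : ∃ wB r, r < v iB ∧ v iB * wB + r = z + v iB - 1 :=
          ⟨(z + v iB - 1) / v iB, (z + v iB - 1) % v iB, Nat.mod_lt _ (by omega),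
            Nat.div_add_mod _ _⟩
        have hwb1 : z ≤ v iB * wB := by omega
        have hwb2 : v iB * wB ≤ z + v iB - 1 := by omega
        have hwBxB : wB ≤ x iB := by
          by_contra hc
          push_neg at hc
          have h1 : v iB * (x iB + 1) ≤ v iB * wB := Nat.mul_le_mul_left _ (by omega)
          have h2 : v iB * (x iB + 1) = v iB * x iB + v iB := by ring
          omega
        have hwblt : v iB * wB + 1 ≤ k * P := by omega
        obtain ⟨u, hudef⟩ : ∃ u, v iB * wB + u = k * P := ⟨k * P - v iB * wB, by omega⟩
        exact KEY wB u hudef hwBxB (by omega) (by omega) (by omega)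
    · -- branch b : use all of both coins
      push_neg at hm
      obtain ⟨u, hudef⟩ : ∃ u, v iB * x iB + u = k * P := ⟨k * P - v iB * x iB, by omega⟩
      have hub : v iA * x iA + 1 ≤ u := by omega
      obtain ⟨ρ, hρlt, hρmod⟩ := exists_rho Q (v iA) u hQ2 hcopAQ
      have hρxA : ρ ≤ x iA := by omega
      obtain ⟨m7, r7, hr7, hm7⟩ : ∃ m r, r < Q ∧ Q * m + r = x iA - ρ :=
        ⟨(x iA - ρ) / Q, (x iA - ρ) % Q, Nat.mod_lt _ (by omega), Nat.div_add_mod _ _⟩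
      have hxd : x iA = (ρ + Q * m7) + r7 := by omega
      have hwAxA : ρ + Q * m7 ≤ x iA := by omega
      have hAwA_mod : (v iA * (ρ + Q * m7)) % Q = u % Q := by
        have h1 : v iA * (ρ + Q * m7) = v iA * ρ + Q * (v iA * m7) := by ring
        rw [h1, Nat.add_mul_mod_self_left, hρmod]
      have hAwA_le : v iA * (ρ + Q * m7) ≤ u := by
        have h1 : v iA * (ρ + Q * m7) ≤ v iA * x iA := Nat.mul_le_mul_left _ hwAxA
        omega
      obtain ⟨l, hldef⟩ : ∃ l, v iA * (ρ + Q * m7) + l = u :=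
        ⟨u - v iA * (ρ + Q * m7), by omega⟩
      have hQl : Q ∣ l := by
        have hme : v iA * (ρ + Q * m7) ≡ u [MOD Q] := hAwA_mod
        have hdd := (Nat.modEq_iff_dvd' hAwA_le).mp hme
        have he : u - v iA * (ρ + Q * m7) = l := by omega
        rwa [he] at hdd
      obtain ⟨j, hj⟩ := hQl
      have he8b : v iA * x iA = v iA * (ρ + Q * m7) + v iA * r7 := by rw [hxd]; ring
      have he9b : l + v iA * x iA = u + v iA * r7 := by omega
      have he10b : v iA * r7 + v iA ≤ v iA * Q := by
        have h1 : v iA * (r7 + 1) ≤ v iA * Q := Nat.mul_le_mul_left _ (by omega)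
        have h2 : v iA * (r7 + 1) = v iA * r7 + v iA := by ring
        omega
      refine H2 iA hiA iB hiB (ρ + Q * m7) (x iB) j hwAxA le_rfl ?_ (Or.inr ?_)
      · rw [← hQdef]
        have h1 : j * Q = l := by rw [hj]; ring
        omega
      · rw [← hQdef]
        have h1 : (j + 1) * Q = l + Q := by rw [hj]; ring
        omega


/-- If `a₁x₁ + ⋯ + aₙxₙ = t·a₁⋯aₙ` with `aᵢ ≥ 1`, `xᵢ ≥ 0` and `t ≥ 2`,
then there are `xᵢ' ∈ [0, xᵢ]` with `a₁x₁' + ⋯ + aₙxₙ' = a₁⋯aₙ`. -/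
theorem statement5 (n : ℕ) (hn : 0 < n) (a x : Fin n → ℕ) (ha : ∀ i, 0 < a i)
    (t : ℕ) (ht : 2 ≤ t) (h : ∑ i, a i * x i = t * ∏ i, a i) :
    ∃ x' : Fin n → ℕ, (∀ i, x' i ≤ x i) ∧ ∑ i, a i * x' i = ∏ i, a i := by
  obtain ⟨y, hy, hsum⟩ := lemmaM (Finset.univ.card (α := Fin n)) Finset.univ rfl a x
    (fun i _ => ha i) 1 (by
      rw [h]
      exact Nat.mul_le_mul_right _ ht)
  exact ⟨y, hy, by rw [hsum, one_mul]⟩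
end

section
/- Let H be a monoid such that the reduced quotient H_red = H/H^× is finitely generated, let a, b ∈ H be nonunits, and let x ∈ ℚ with x ≥ 0. Then there exists a nice pair (k', ℓ') with respect to (a, b), with k' ∈ ℕ and ℓ' ∈ ℕ₀, such that ℓ'/k' = x. -/
open Filter Topology

/-!
Everything happens in the reduced monoid `Associates H`. Being finitely generated, it has
finitely many atoms `u i`, and divisibility on it is a well-quasi-order, so it is atomic. For a
nonunit `c`, the pairs `(n, e)` with `∏ i, u i ^ e i = c ^ n` form a submonoid of `ℕ × (ι → ℕ)`
that is closed under differences, hence finitely generated (Dickson's lemma). The ratio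
`(∑ i, e i) / n` is therefore maximal at some `(n₀, e₀)` and minimal at some `(n₁, e₁)`, so that
`max L(c ^ (n₀ * s)) = s * ∑ i, e₀ i` and `min L(c ^ (n₁ * s)) = s * ∑ i, e₁ i`, and
`m = n₀ * n₁` is a period for both. With `x = p / q` and `c = [a ^ q * b ^ p]`, the pair
`(m * q, m * p)` is nice.
-/

section Lengths

variable {M : Type*} [CommMonoid M]

theorem mem_lengthSet_iff_multiset {y : M} (hy : ¬IsUnit y) {k : ℕ} :
    k ∈ lengthSet M y ↔
      ∃ s : Multiset M, (∀ a ∈ s, Irreducible a) ∧ s.prod = y ∧ Multiset.card s = k := by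
  rw [lengthSet, if_neg hy]
  constructor
  · rintro ⟨f, hf, rfl⟩
    exact ⟨List.ofFn f, by simpa using hf, by simp [List.prod_ofFn], by simp⟩
  · rintro ⟨⟨l⟩, hl, rfl, rfl⟩
    exact ⟨fun i => l[i.1], fun i => hl _ (List.getElem_mem _), (Fin.prod_univ_getElem l).symm⟩

theorem mem_lengthSet_iff_exponents {ι : Type*} [Fintype ι] {u : ι → M}
    (hu : Set.range u = {a | Irreducible a}) {y : M} (hy : ¬IsUnit y) {k : ℕ} :
    k ∈ lengthSet M y ↔ ∃ e : ι → ℕ, ∏ i, u i ^ e i = y ∧ ∑ i, e i = k := by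
  classical
  have : CanLift M ι u Irreducible := ⟨fun a ha => hu.symm.subset ha⟩
  rw [mem_lengthSet_iff_multiset hy]
  constructor
  · rintro ⟨s, hs, rfl, rfl⟩
    lift s to Multiset ι using hs
    refine ⟨s.count, ?_, by simp⟩
    rw [Finset.prod_multiset_map_count]
    exact (Finset.prod_subset (Finset.subset_univ _) fun i _ hi => by
      simp [Multiset.count_eq_zero.mpr (by simpa using hi)]).symm
  · rintro ⟨e, rfl, rfl⟩
    refine ⟨∑ i, Multiset.replicate (e i) (u i), ?_, by simp [Multiset.prod_sum],
      by simp [Multiset.card_sum]⟩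
    simp only [Multiset.mem_sum, Finset.mem_univ, true_and, forall_exists_index]
    intro a i ha
    rw [Multiset.eq_of_mem_replicate ha]
    exact hu.subset (Set.mem_range_self i)

theorem lengthSet_subset_of_associated {y z : M} (h : Associated y z) :
    lengthSet M y ⊆ lengthSet M z := by
  obtain ⟨u, rfl⟩ := h
  by_cases hy : IsUnit y
  · simp [lengthSet, hy]
  have hyu : ¬IsUnit (y * u) := fun h => hy (isUnit_of_mul_isUnit_left h)
  intro k hk
  obtain ⟨s, hs, rfl, rfl⟩ := (mem_lengthSet_iff_multiset hy).mp hk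
  obtain ⟨a, t, rfl⟩ : ∃ a t, s = a ::ₘ t := by
    obtain ⟨a, ha⟩ := Multiset.exists_mem_of_ne_zero (s := s) (by rintro rfl; simp at hy)
    exact ⟨a, Multiset.exists_cons_of_mem ha⟩
  refine (mem_lengthSet_iff_multiset hyu).mpr
    ⟨(a * u) ::ₘ t, ?_, by simp [mul_right_comm], by simp⟩
  simp only [Multiset.mem_cons, forall_eq_or_imp] at hs ⊢
  exact ⟨(associated_mul_unit_right a u u.isUnit).irreducible hs.1, hs.2⟩

theorem Associated.lengthSet_eq {y z : M} (h : Associated y z) : lengthSet M y = lengthSet M z :=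
  (lengthSet_subset_of_associated h).antisymm (lengthSet_subset_of_associated h.symm)

end Lengths

section FinitelyGenerated

variable {M : Type*} [Monoid M] [Subsingleton Mˣ]

theorem Irreducible.mem_of_mem_closure {S : Set M} {x : M} (hx : x ∈ Submonoid.closure S)
    (hirr : Irreducible x) : x ∈ S := by
  induction hx using Submonoid.closure_induction with
  | mem x h => exact h
  | one => exact absurd hirr not_irreducible_one
  | mul x y _ _ ihx ihy =>
    rcases hirr.isUnit_or_isUnit rfl with hx | hy
    · rw [isUnit_iff_eq_one.mp hx, one_mul] at hirr ⊢
      exact ihy hirr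
    · rw [isUnit_iff_eq_one.mp hy, mul_one] at hirr ⊢
      exact ihx hirr

theorem finite_setOf_irreducible [hfg : Monoid.FG M] : {x : M | Irreducible x}.Finite := by
  obtain ⟨S, hS, hfin⟩ := Monoid.fg_iff.mp hfg
  exact hfin.subset fun x hx => Irreducible.mem_of_mem_closure (hS ▸ Submonoid.mem_top x) hx

end FinitelyGenerated

namespace Associates

variable {H : Type*}

theorem irreducible_mk_iff [CommMonoid H] {a : H} :
    Irreducible (Associates.mk a) ↔ Irreducible a := by
  simp only [irreducible_iff, isUnit_mk, and_congr_right_iff]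
  refine fun _ => ⟨fun h b c hbc => ?_, fun h x y hxy => ?_⟩
  · exact (h (a := .mk b) (b := .mk c) (by rw [hbc, mk_mul_mk])).imp isUnit_mk.1 isUnit_mk.1
  · obtain ⟨b, rfl⟩ := mk_surjective x
    obtain ⟨c, rfl⟩ := mk_surjective y
    obtain ⟨w, hw⟩ := mk_eq_mk_iff_associated.mp (hxy.trans mk_mul_mk).symm
    refine (h (a := b) (b := c * ↑w) (by rw [← mul_assoc, hw])).imp isUnit_mk.2 fun hc => ?_
    exact isUnit_mk.2 (isUnit_of_mul_isUnit_left hc)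

theorem lengthSet_mk [CommMonoid H] (y : H) :
    lengthSet (Associates H) (Associates.mk y) = lengthSet H y := by
  by_cases hy : IsUnit y
  · simp [lengthSet, hy]
  ext k
  rw [mem_lengthSet_iff_multiset (isUnit_mk.not.mpr hy)]
  constructor
  · rintro ⟨s, hs, hprod, rfl⟩
    obtain ⟨g, hg⟩ := mk_surjective (M := H).hasRightInverse
    have hmk : (s.map g).map Associates.mk = s := by simp [Multiset.map_map, hg _]
    have ht : Associated (s.map g).prod y :=
      mk_eq_mk_iff_associated.mp (by rw [← prod_mk, hmk, hprod])
    rw [← ht.lengthSet_eq, mem_lengthSet_iff_multiset (ht.isUnit_iff.not.mpr hy)]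
    refine ⟨s.map g, Multiset.forall_mem_map_iff.mpr fun x hx => ?_, rfl, Multiset.card_map _ _⟩
    exact irreducible_mk_iff.mp (by rw [hg x]; exact hs x hx)
  · intro hk
    obtain ⟨s, hs, rfl, rfl⟩ := (mem_lengthSet_iff_multiset hy).mp hk
    refine ⟨s.map Associates.mk, Multiset.forall_mem_map_iff.mpr fun x hx => ?_, prod_mk,
      Multiset.card_map _ _⟩
    exact irreducible_mk_iff.mpr (hs x hx)

instance instIsCancelMul [CancelCommMonoid H] : IsCancelMul (Associates H) :=
  have : IsLeftCancelMul (Associates H) := ⟨fun x y z h => by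
    obtain ⟨a, rfl⟩ := mk_surjective x
    obtain ⟨b, rfl⟩ := mk_surjective y
    obtain ⟨c, rfl⟩ := mk_surjective z
    obtain ⟨u, hu⟩ := mk_eq_mk_iff_associated.mp (by simpa only [mk_mul_mk] using h)
    exact mk_eq_mk_iff_associated.mpr ⟨u, mul_left_cancel (by rw [← hu, mul_assoc])⟩⟩
  CommMagma.IsLeftCancelMul.toIsCancelMul _

instance instWellQuasiOrderedLE [CommMonoid H] [Monoid.FG (Associates H)] :
    WellQuasiOrderedLE (Associates H) := by
  obtain ⟨S, hS⟩ := Monoid.FG.fg_top (M := Associates H)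
  refine Monotone.wellQuasiOrderedLE_of_wellQuasiOrderedLE_of_surjective
    (f := fun e : S → ℕ => ∏ s : S, (s : Associates H) ^ e s)
    (fun _ _ h => Finset.prod_dvd_prod_of_dvd _ _ fun s _ => pow_dvd_pow _ (Pi.le_def.mp h s))
    fun x => ?_
  obtain ⟨f, -, hf⟩ := Submonoid.mem_closure_finset.mp (hS ▸ Submonoid.mem_top x)
  exact ⟨fun s => f s, (Finset.prod_coe_sort S fun s => s ^ f s).trans hf⟩

theorem lt_mul_of_not_isUnit [CancelCommMonoid H] (x : Associates H) {y : Associates H}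
    (hy : ¬IsUnit y) : x < x * y := by
  refine lt_of_le_not_ge le_mul_right fun ⟨z, hz⟩ => hy ?_
  exact IsUnit.of_mul_eq_one z (mul_left_cancel (by rw [mul_one, ← mul_assoc, ← hz]))

theorem lengthSet_nonempty [CancelCommMonoid H] [Monoid.FG (Associates H)] {x : Associates H}
    (hx : ¬IsUnit x) : (lengthSet (Associates H) x).Nonempty := by
  induction x using WellFoundedLT.induction with
  | _ x ih =>
  by_cases hirr : Irreducible x
  · exact ⟨1, (mem_lengthSet_iff_multiset hx).mpr ⟨{x}, by simpa using hirr, by simp, by simp⟩⟩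
  obtain ⟨y, z, rfl, hy, hz⟩ : ∃ y z, x = y * z ∧ ¬IsUnit y ∧ ¬IsUnit z := by
    simpa only [irreducible_iff, hx, not_false_eq_true, true_and, not_forall, not_or,
      exists_prop] using hirr
  obtain ⟨k, hk⟩ := ih y (lt_mul_of_not_isUnit y hz) hy
  obtain ⟨l, hl⟩ := ih z (mul_comm y z ▸ lt_mul_of_not_isUnit z hy) hz
  obtain ⟨s, hs, rfl, rfl⟩ := (mem_lengthSet_iff_multiset hy).mp hk
  obtain ⟨t, ht, rfl, rfl⟩ := (mem_lengthSet_iff_multiset hz).mp hl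
  refine ⟨_, (mem_lengthSet_iff_multiset hx).mpr ⟨s + t, ?_, Multiset.prod_add s t, rfl⟩⟩
  simpa [or_imp, forall_and] using ⟨hs, ht⟩

end Associates

theorem AddSubmonoid.FG.exists_forall_mul_le {α : Type*} [AddCommMonoid α]
    {P : AddSubmonoid α} (hP : P.FG) (f g : α →+ ℕ) (hfg : ∀ v ∈ P, g v = 0 → f v = 0)
    (hpos : ∃ v ∈ P, 0 < g v) :
    ∃ w ∈ P, 0 < g w ∧ ∀ v ∈ P, f v * g w ≤ f w * g v := by
  classical
  obtain ⟨G, rfl⟩ := hP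
  set G' := G.filter fun v => 0 < g v
  have hG' : G'.Nonempty := by
    obtain ⟨v, hv, hgv⟩ := hpos
    by_contra h
    simp only [G', Finset.not_nonempty_iff_eq_empty, Finset.filter_eq_empty_iff, not_lt,
      nonpos_iff_eq_zero] at h
    have hker : AddSubmonoid.closure (G : Set α) ≤ AddMonoidHom.mker g :=
      AddSubmonoid.closure_le.mpr fun x hx => h hx
    exact hgv.ne' (hker hv)
  obtain ⟨w, hwG', hw⟩ := G'.exists_max_image (fun v => (f v : ℚ) / g v) hG'
  obtain ⟨hwG, hgw⟩ := Finset.mem_filter.mp hwG'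
  refine ⟨w, AddSubmonoid.subset_closure hwG, hgw, fun v hv => ?_⟩
  -- The inequality is additive in `v`, so it suffices to check it on the generators.
  induction hv using AddSubmonoid.closure_induction with
  | mem x hx =>
    rcases (g x).eq_zero_or_pos with hx0 | hx0
    · simp [hfg x (AddSubmonoid.subset_closure hx) hx0]
    · have := hw x (Finset.mem_filter.mpr ⟨hx, hx0⟩)
      rw [div_le_div_iff₀ (by exact_mod_cast hx0) (by exact_mod_cast hgw)] at this
      exact_mod_cast this
  | zero => simp
  | add x y _ _ hx hy =>
    rw [map_add, map_add, add_mul, mul_add]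
    exact add_le_add hx hy

section PowFactorizations

variable {M : Type*} [CommMonoid M] {ι : Type*} [Fintype ι]

def powFactorizations (u : ι → M) (c : M) : AddSubmonoid (ℕ × (ι → ℕ)) where
  carrier := {v | ∏ i, u i ^ v.2 i = c ^ v.1}
  zero_mem' := by simp
  add_mem' {v w} hv hw := by
    simp only [Set.mem_ofPred_eq, Prod.snd_add, Prod.fst_add, Pi.add_apply, pow_add,
      Finset.prod_mul_distrib] at *
    rw [hv, hw]

theorem mem_powFactorizations {u : ι → M} {c : M} {v : ℕ × (ι → ℕ)} :
    v ∈ powFactorizations u c ↔ ∏ i, u i ^ v.2 i = c ^ v.1 :=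
  Iff.rfl

theorem powFactorizations_fg [IsCancelMul M] (u : ι → M) (c : M) :
    (powFactorizations u c).FG :=
  AddSubmonoid.fg_of_subtractive fun v hv w hvw => by
    rw [mem_powFactorizations] at hv hvw ⊢
    simp only [Prod.snd_add, Prod.fst_add, Pi.add_apply, pow_add, Finset.prod_mul_distrib,
      hv] at hvw
    exact mul_left_cancel hvw

variable {u : ι → M} {c : M}

theorem fst_eq_zero_iff_sum_eq_zero (hu : Set.range u = {a | Irreducible a}) (hc : ¬IsUnit c)
    {v : ℕ × (ι → ℕ)} (hv : v ∈ powFactorizations u c) : v.1 = 0 ↔ ∑ i, v.2 i = 0 := by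
  rw [mem_powFactorizations] at hv
  rw [Finset.sum_eq_zero_iff]
  constructor
  · intro h i _
    by_contra hi
    have hui : Irreducible (u i) := hu.subset (Set.mem_range_self i)
    rw [h, pow_zero] at hv
    refine hui.not_isUnit (isUnit_of_dvd_one ?_)
    exact hv ▸ (dvd_pow_self _ hi).trans (Finset.dvd_prod_of_mem _ (Finset.mem_univ i))
  · intro h
    by_contra hn
    rw [Finset.prod_eq_one fun i _ => by rw [h i (Finset.mem_univ i), pow_zero]] at hv
    exact hc ((isUnit_pow_iff hn).mp (hv ▸ isUnit_one))

theorem mem_lengthSet_pow_iff (hu : Set.range u = {a | Irreducible a}) (hc : ¬IsUnit c)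
    {n : ℕ} (hn : 0 < n) {k : ℕ} :
    k ∈ lengthSet M (c ^ n) ↔ ∃ e, (n, e) ∈ powFactorizations u c ∧ ∑ i, e i = k :=
  mem_lengthSet_iff_exponents hu (by rwa [isUnit_pow_iff hn.ne'])

theorem mul_sum_mem_lengthSet_pow_mul (hu : Set.range u = {a | Irreducible a})
    (hc : ¬IsUnit c) {w : ℕ × (ι → ℕ)} (hw : w ∈ powFactorizations u c) (hw1 : 0 < w.1)
    {s : ℕ} (hs : 0 < s) : s * ∑ i, w.2 i ∈ lengthSet M (c ^ (w.1 * s)) := by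
  refine (mem_lengthSet_pow_iff hu hc (by positivity)).mpr
    ⟨s • w.2, ?_, by simp [Finset.mul_sum]⟩
  convert AddSubmonoid.nsmul_mem _ hw s using 1
  simp [Prod.smul_def, mul_comm]

theorem csSup_lengthSet_pow_mul (hu : Set.range u = {a | Irreducible a}) (hc : ¬IsUnit c)
    {w : ℕ × (ι → ℕ)} (hw : w ∈ powFactorizations u c) (hw1 : 0 < w.1)
    (hmax : ∀ v ∈ powFactorizations u c, (∑ i, v.2 i) * w.1 ≤ (∑ i, w.2 i) * v.1)
    {s : ℕ} (hs : 0 < s) :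
    sSup (lengthSet M (c ^ (w.1 * s))) = s * ∑ i, w.2 i := by
  refine IsGreatest.csSup_eq ⟨mul_sum_mem_lengthSet_pow_mul hu hc hw hw1 hs, fun k hk => ?_⟩
  obtain ⟨e, he, rfl⟩ := (mem_lengthSet_pow_iff hu hc (by positivity)).mp hk
  refine Nat.le_of_mul_le_mul_right ?_ hw1
  linarith [hmax _ he]

theorem csInf_lengthSet_pow_mul (hu : Set.range u = {a | Irreducible a}) (hc : ¬IsUnit c)
    {w : ℕ × (ι → ℕ)} (hw : w ∈ powFactorizations u c) (hw1 : 0 < w.1)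
    (hmin : ∀ v ∈ powFactorizations u c, v.1 * ∑ i, w.2 i ≤ w.1 * ∑ i, v.2 i)
    {s : ℕ} (hs : 0 < s) :
    sInf (lengthSet M (c ^ (w.1 * s))) = s * ∑ i, w.2 i := by
  refine IsLeast.csInf_eq ⟨mul_sum_mem_lengthSet_pow_mul hu hc hw hw1 hs, fun k hk => ?_⟩
  obtain ⟨e, he, rfl⟩ := (mem_lengthSet_pow_iff hu hc (by positivity)).mp hk
  refine Nat.le_of_mul_le_mul_right ?_ hw1
  linarith [hmin _ he]

end PowFactorizations

/-- A pair `(k, ℓ) ≠ (0, 0)` is nice with respect to `(a, b)` iff this holds for `y = aᵏbˡ`. -/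
def ExtremalLengthsLinear (M : Type*) [CommMonoid M] (y : M) : Prop :=
  ∀ t : ℕ, 0 < t →
    sSup (lengthSet M (y ^ t)) = t * sSup (lengthSet M y) ∧
    sInf (lengthSet M (y ^ t)) = t * sInf (lengthSet M y)

theorem exists_extremalLengthsLinear_pow {M : Type*} [CommMonoid M] [IsCancelMul M]
    {ι : Type*} [Fintype ι] {u : ι → M} (hu : Set.range u = {a | Irreducible a}) {c : M}
    (hc : ¬IsUnit c) (hfact : (lengthSet M c).Nonempty) :
    ∃ m, 0 < m ∧ ExtremalLengthsLinear M (c ^ m) := by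
  set P := powFactorizations u c
  let len : ℕ × (ι → ℕ) →+ ℕ :=
    (∑ i, Pi.evalAddMonoidHom (fun _ => ℕ) i).comp (AddMonoidHom.snd ℕ (ι → ℕ))
  have hlen (v : ℕ × (ι → ℕ)) : len v = ∑ i, v.2 i := by simp [len]
  have hzero (v) (hv : v ∈ P) : v.1 = 0 ↔ len v = 0 :=
    hlen v ▸ fst_eq_zero_iff_sum_eq_zero hu hc hv
  obtain ⟨k, hk⟩ := hfact
  obtain ⟨e, he, -⟩ := (mem_lengthSet_pow_iff hu hc one_pos).mp (by rwa [pow_one])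
  have he_len : 0 < len (1, e) := Nat.pos_of_ne_zero fun h => one_ne_zero ((hzero _ he).2 h)
  -- `w` maximises and `w'` minimises the ratio `len v / v.1` over `P`.
  obtain ⟨w, hw, hw1, hmax⟩ := (powFactorizations_fg u c).exists_forall_mul_le len
    (AddMonoidHom.fst _ _) (fun v hv => (hzero v hv).1) ⟨_, he, one_pos⟩
  obtain ⟨w', hw', hw'_len, hmin⟩ := (powFactorizations_fg u c).exists_forall_mul_le
    (AddMonoidHom.fst _ _) len (fun v hv => (hzero v hv).2) ⟨_, he, he_len⟩
  have hw'1 : 0 < w'.1 := Nat.pos_of_ne_zero fun h => hw'_len.ne' ((hzero _ hw').1 h)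
  simp only [AddMonoidHom.coe_fst, hlen] at hw1 hmax hmin
  refine ⟨w.1 * w'.1, by positivity, fun t ht => ⟨?_, ?_⟩⟩
  · rw [← pow_mul, mul_assoc, csSup_lengthSet_pow_mul hu hc hw hw1 hmax (by positivity),
      csSup_lengthSet_pow_mul hu hc hw hw1 hmax hw'1]
    ring
  · rw [← pow_mul, mul_comm w.1, mul_assoc,
      csInf_lengthSet_pow_mul hu hc hw' hw'1 hmin (by positivity),
      csInf_lengthSet_pow_mul hu hc hw' hw'1 hmin hw1]
    ring

theorem Associates.extremalLengthsLinear_mk_iff {H : Type*} [CommMonoid H] {y : H} :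
    ExtremalLengthsLinear (Associates H) (Associates.mk y) ↔ ExtremalLengthsLinear H y := by
  simp only [ExtremalLengthsLinear, ← Associates.mk_pow, Associates.lengthSet_mk]

theorem Associates.exists_extremalLengthsLinear_pow {H : Type*} [CancelCommMonoid H]
    [Monoid.FG (Associates H)] {c : Associates H} (hc : ¬IsUnit c) :
    ∃ m, 0 < m ∧ ExtremalLengthsLinear (Associates H) (c ^ m) := by
  have : Finite {x : Associates H // Irreducible x} := finite_setOf_irreducible
  have := Fintype.ofFinite {x : Associates H // Irreducible x}
  exact _root_.exists_extremalLengthsLinear_pow Subtype.range_coe_subtype hc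
    (lengthSet_nonempty hc)

theorem statement13_general (H : Type*) [CancelCommMonoid H]
    (hfg : Monoid.FG (Associates H)) (a b : H) (ha : ¬ IsUnit a)
    (x : ℚ) (hx : 0 ≤ x) :
    ∃ (k ℓ : ℕ), 0 < k ∧ IsNicePair H a b k ℓ ∧ (ℓ : ℚ) / (k : ℚ) = x := by
  obtain ⟨p, q, hq, rfl⟩ : ∃ p q : ℕ, 0 < q ∧ (p : ℚ) / q = x := by
    refine ⟨x.num.toNat, x.den, x.pos, ?_⟩
    rw [← Int.cast_natCast, Int.toNat_of_nonneg (Rat.num_nonneg.mpr hx), Rat.num_div_den]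
  have hc : ¬IsUnit (Associates.mk (a ^ q * b ^ p)) := by
    rw [Associates.isUnit_mk, IsUnit.mul_iff, isUnit_pow_iff hq.ne']
    exact fun h => ha h.1
  obtain ⟨m, hm, hlin⟩ := Associates.exists_extremalLengthsLinear_pow hc
  refine ⟨m * q, m * p, by positivity, ⟨fun h => (Nat.mul_pos hm hq).ne' h.1, ?_⟩, ?_⟩
  · rw [← Associates.mk_pow, mul_pow, ← pow_mul, ← pow_mul, mul_comm q, mul_comm p] at hlin
    exact Associates.extremalLengthsLinear_mk_iff.mp hlin
  · push_cast
    exact mul_div_mul_left _ _ (by positivity)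

/-- If `H_red = H/H^×` is finitely generated, `a, b ∈ H` are nonunits
and `x ∈ ℚ` with `x ≥ 0`, then there is a nice pair `(k', ℓ')` with respect to `(a, b)`
with `k' ∈ ℕ`, `ℓ' ∈ ℕ₀` and `ℓ'/k' = x`. -/
theorem statement13 (H : Type*) [CancelCommMonoid H]
    (hfg : Monoid.FG (Associates H)) (a b : H) (ha : ¬ IsUnit a) (hb : ¬ IsUnit b)
    (x : ℚ) (hx : 0 ≤ x) :
    ∃ (k ℓ : ℕ), 0 < k ∧ IsNicePair H a b k ℓ ∧ (ℓ : ℚ) / (k : ℚ) = x :=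
  statement13_general H hfg a b ha x hx
end
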